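/- The expected number of iterations for the modified GSEMO (parent selection restricted to points maximising L(x) = LO(x) + TZ(x)) to obtain a first Pareto-optimal search point on LOTZ is at most ∑_{L=0}^{n−2} en/2 = O(n²), regardless of the diversity-based parent-selection mechanism used within the restricted subpopulation. -/

import Mathlib

noncomputable section
open scoped ENNReal
attribute [local instance] Classical.propDecidable

namespace EMO


/-- A bit string of length `n`. -/
abbrev BitString (n : ℕ) := Fin n → Bool

/-- Number of one-bits. -/
def onesCount {n : ℕ} (x : BitString n) : ℕ :=
  (Finset.univ.filter fun i => x i = true).card

def allOnes (n : ℕ) : BitString n := fun _ => true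
def allZeros (n : ℕ) : BitString n := fun _ => false

/-- The bi-objective function OneMinMax. -/
def OneMinMax {n : ℕ} (x : BitString n) : ℤ × ℤ :=
  ((onesCount x : ℤ), (n : ℤ) - (onesCount x : ℤ))

/-- Number of leading ones. -/
def leadingOnes {n : ℕ} (x : BitString n) : ℕ :=
  (Finset.univ.filter fun i : Fin n => ∀ j : Fin n, j ≤ i → x j = true).card

/-- Number of trailing zeros. -/
def trailingZeros {n : ℕ} (x : BitString n) : ℕ :=
  (Finset.univ.filter fun i : Fin n => ∀ j : Fin n, i ≤ j → x j = false).card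

/-- The bi-objective function LOTZ. -/
def LOTZ {n : ℕ} (x : BitString n) : ℤ × ℤ :=
  ((leadingOnes x : ℤ), (trailingZeros x : ℤ))

/-- `y` dominates `x` (maximisation). -/
def dominates {n : ℕ} (f : BitString n → ℤ × ℤ) (y x : BitString n) : Prop :=
  (f x).1 ≤ (f y).1 ∧ (f x).2 ≤ (f y).2 ∧ f x ≠ f y

/-- `y` weakly dominates `x` (maximisation). -/
def weaklyDominates {n : ℕ} (f : BitString n → ℤ × ℤ) (y x : BitString n) : Prop :=
  (f x).1 ≤ (f y).1 ∧ (f x).2 ≤ (f y).2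

/-- Pareto optimality. -/
def paretoOptimal {n : ℕ} (f : BitString n → ℤ × ℤ) (x : BitString n) : Prop :=
  ¬ ∃ y : BitString n, dominates f y x

/-- A population of mutually non-dominated points. -/
def mutuallyNonDominated {n : ℕ} (f : BitString n → ℤ × ℤ)
    (P : Finset (BitString n)) : Prop :=
  ∀ x ∈ P, ∀ y ∈ P, ¬ dominates f y x

/-- Flip bit `i` of `x`. -/
def flipBit {n : ℕ} (x : BitString n) (i : Fin n) : BitString n :=
  Function.update x i (!x i)

/-- `y` is a Hamming neighbour of `x`. -/
def hammingNeighbour {n : ℕ} (x y : BitString n) : Prop :=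
  ∃ i : Fin n, y = flipBit x i

/-- `x` is good relative to population `P`: it is Pareto optimal and has a Pareto-optimal
Hamming neighbour whose objective vector is not attained by any member of `P`. -/
def isGood {n : ℕ} (f : BitString n → ℤ × ℤ) (P : Finset (BitString n))
    (x : BitString n) : Prop :=
  paretoOptimal f x ∧
    ∃ y : BitString n, hammingNeighbour x y ∧ paretoOptimal f y ∧ ∀ z ∈ P, f z ≠ f y

/-- `x` is bad relative to population `P`. -/
def isBad {n : ℕ} (f : BitString n → ℤ × ℤ) (P : Finset (BitString n))
    (x : BitString n) : Prop :=
  paretoOptimal f x ∧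
    ¬ ∃ y : BitString n, hammingNeighbour x y ∧ paretoOptimal f y ∧ ∀ z ∈ P, f z ≠ f y

/-- `P` covers the whole Pareto front of `f`. -/
def coversFront {n : ℕ} (f : BitString n → ℤ × ℤ) (P : Finset (BitString n)) : Prop :=
  ∀ x : BitString n, paretoOptimal f x → ∃ z ∈ P, f z = f x

/-- The hypervolume contribution of `x` to `P` (for a population of mutually
non-dominated points, with reference point `r`). -/
def HVC {n : ℕ} (f : BitString n → ℤ × ℤ) (r : ℤ × ℤ) (x : BitString n)
    (P : Finset (BitString n)) : ℤ :=
  ((f x).1 - (((P.filter fun z => (f z).1 < (f x).1).image fun z => (f z).1).max.unbotD r.1)) *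
  ((f x).2 - (((P.filter fun z => (f z).2 < (f x).2).image fun z => (f z).2).max.unbotD r.2))

/-- Crowding distance of `x` in `P` with respect to a single objective `g`: infinite for the
boundary points, and otherwise the normalised difference between successor and predecessor. -/
def CDCobj {n : ℕ} (g : BitString n → ℤ) (x : BitString n)
    (P : Finset (BitString n)) : ℝ≥0∞ :=
  if (∀ z ∈ P, g x ≤ g z) ∨ (∀ z ∈ P, g z ≤ g x) then ⊤
  else
    (((((P.filter fun z => g x < g z).image g).min.untopD 0 -
        (((P.filter fun z => g z < g x).image g).max.unbotD 0)).toNat : ℝ≥0∞)) /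
      ((((P.image g).max.unbotD 0 - ((P.image g).min.untopD 0)).toNat : ℝ≥0∞))

/-- The crowding distance contribution of `x` to `P`. -/
def CDC {n : ℕ} (f : BitString n → ℤ × ℤ) (x : BitString n)
    (P : Finset (BitString n)) : ℝ≥0∞ :=
  CDCobj (fun z => (f z).1) x P + CDCobj (fun z => (f z).2) x P

/-- A diversity measure `c` is diversity-favouring on `S`. -/
def diversityFavouring {n : ℕ} {α : Type*} [Preorder α] (f : BitString n → ℤ × ℤ)
    (c : BitString n → Finset (BitString n) → α) (S : Set (BitString n)) : Prop :=
  ∀ P : Finset (BitString n), mutuallyNonDominated f P →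
    ∀ x ∈ P, ∀ y ∈ P, x ∈ S → y ∈ S → isBad f P x → isGood f P y → c x P < c y P

/-- The default bit string (used only to make selection kernels total). -/
def defaultBS (n : ℕ) : BitString n := fun _ => false

/-- Local mutation: flip a single uniformly random bit. -/
def localMutation {n : ℕ} (hn : 0 < n) (x : BitString n) : PMF (BitString n) :=
  haveI : Nonempty (Fin n) := ⟨⟨0, hn⟩⟩
  (PMF.uniformOfFintype (Fin n)).map (flipBit x)

/-- A Bernoulli coin with success probability `1/n` (for `n ≥ 1`). -/
def bitFlipCoin (n : ℕ) : PMF Bool :=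
  PMF.ofFintype (fun b => cond b (min ((n : ℝ≥0∞))⁻¹ 1) (1 - min ((n : ℝ≥0∞))⁻¹ 1))
    (by simp [Fintype.sum_bool, add_tsub_cancel_of_le (min_le_right ((n : ℝ≥0∞))⁻¹ 1)])

/-- Global (standard bit) mutation: flip each bit independently with probability `1/n`. -/
def globalMutationAux {n : ℕ} : List (Fin n) → BitString n → PMF (BitString n)
  | [], x => PMF.pure x
  | i :: is, x => (bitFlipCoin n).bind fun b =>
      globalMutationAux is (if b then flipBit x i else x)

def globalMutation {n : ℕ} (x : BitString n) : PMF (BitString n) :=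
  globalMutationAux (List.finRange n) x

/-- Survival selection: if `s'` is not dominated by any member of `P`, add `s'` to `P` and
remove all members weakly dominated by `s'`. -/
def updatePop {n : ℕ} (f : BitString n → ℤ × ℤ) (P : Finset (BitString n))
    (s' : BitString n) : Finset (BitString n) :=
  if ∃ z ∈ P, dominates f z s' then P
  else insert s' (P.filter fun z => ¬ weaklyDominates f s' z)

/-- One iteration of (G)SEMO with parent-selection kernel `select` and mutation `mutate`. -/
def step {n : ℕ} (f : BitString n → ℤ × ℤ)
    (select : Finset (BitString n) → PMF (BitString n))
    (mutate : BitString n → PMF (BitString n))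
    (P : Finset (BitString n)) : PMF (Finset (BitString n)) :=
  (select P).bind fun s => (mutate s).map fun s' => updatePop f P s'

/-- The L-dominant attribute `L(x) = LO(x) + TZ(x)`. -/
def Ldom {n : ℕ} (x : BitString n) : ℕ := leadingOnes x + trailingZeros x

/-- The subpopulation of points with maximum L-dominant attribute. -/
def maxLSub {n : ℕ} (P : Finset (BitString n)) : Finset (BitString n) :=
  P.filter fun x => ∀ z ∈ P, Ldom z ≤ Ldom x

/-- One iteration of the modified GSEMO: parent selection (and the diversity contribution)
is restricted to the subpopulation of points with maximum L-dominant attribute. -/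
def stepMod {n : ℕ} (f : BitString n → ℤ × ℤ)
    (select : Finset (BitString n) → PMF (BitString n))
    (mutate : BitString n → PMF (BitString n))
    (P : Finset (BitString n)) : PMF (Finset (BitString n)) :=
  (select (maxLSub P)).bind fun s => (mutate s).map fun s' => updatePop f P s'

/-- Initial population: a single uniformly random bit string. -/
def initDist (n : ℕ) : PMF (Finset (BitString n)) :=
  (PMF.uniformOfFintype (BitString n)).map fun x => {x}

/-- Distribution of the population after `t` iterations. -/
def stateDist {S : Type*} (init : PMF S) (st : S → PMF S) : ℕ → PMF S
  | 0 => init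
  | t + 1 => (stateDist init st t).bind st

/-- Expected number of iterations until an (absorbing) goal predicate is reached,
expressed as `∑ₜ Pr[goal not yet reached at time t]`. -/
def expectedRuntime {S : Type*} (init : PMF S) (st : S → PMF S) (goal : S → Prop) : ℝ≥0∞ :=
  ∑' t : ℕ, (stateDist init st t).toOuterMeasure {s | ¬ goal s}

/-- Uniform parent selection. -/
def uniformSelect {n : ℕ} (P : Finset (BitString n)) : PMF (BitString n) :=
  if h : P.Nonempty then PMF.uniformOfFinset P h else PMF.pure (defaultBS n)

/-- Highest Diversity Contribution (HDC) parent selection: select an individual with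
maximum diversity contribution, ties broken uniformly at random. -/
def HDCSelect {n : ℕ} {α : Type*} [LinearOrder α]
    (c : BitString n → Finset (BitString n) → α)
    (P : Finset (BitString n)) : PMF (BitString n) :=
  if h : P.Nonempty then
    PMF.uniformOfFinset (P.filter fun x => ∀ y ∈ P, c y P ≤ c x P)
      (by
        obtain ⟨b, hb, hmax⟩ := P.exists_max_image (fun x => c x P) h
        exact ⟨b, Finset.mem_filter.mpr ⟨hb, hmax⟩⟩)
  else PMF.pure (defaultBS n)

/-- Non-Minimum Uniform at Random (NMUAR) parent selection: select uniformly at random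
among all individuals whose diversity contribution is not minimal (from the whole
population if all contributions are equal). -/
def NMUARSelect {n : ℕ} {α : Type*} [LinearOrder α]
    (c : BitString n → Finset (BitString n) → α)
    (P : Finset (BitString n)) : PMF (BitString n) :=
  if h : P.Nonempty then
    if hQ : (P.filter fun x => ∃ y ∈ P, c y P < c x P).Nonempty then
      PMF.uniformOfFinset _ hQ
    else PMF.uniformOfFinset P h
  else PMF.pure (defaultBS n)

/-- Tournament selection with tournament size `μ = |P|`: draw `μ` individuals uniformly at
random with replacement from `P` and select one with the highest diversity contribution
among the drawn multiset (ties broken uniformly at random). -/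
def tournamentSelect {n : ℕ} {α : Type*} [LinearOrder α]
    (c : BitString n → Finset (BitString n) → α)
    (P : Finset (BitString n)) : PMF (BitString n) :=
  if h : P.Nonempty then
    haveI : Nonempty {x // x ∈ P} := h.to_subtype
    (PMF.uniformOfFintype (Fin P.card → {x // x ∈ P})).bind fun g =>
      PMF.uniformOfFinset
        ((Finset.univ.image fun i => ((g i : {x // x ∈ P}) : BitString n)).filter fun x =>
          ∀ y ∈ Finset.univ.image fun i => ((g i : {x // x ∈ P}) : BitString n), c y P ≤ c x P)
        (by
          have hne : (Finset.univ.image fun i => ((g i : {x // x ∈ P}) : BitString n)).Nonempty := by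
            refine ⟨(g ⟨0, Finset.card_pos.mpr h⟩ : {x // x ∈ P}), ?_⟩
            exact Finset.mem_image.mpr ⟨⟨0, Finset.card_pos.mpr h⟩, Finset.mem_univ _, rfl⟩
          obtain ⟨b, hb, hmax⟩ :=
            Finset.exists_max_image _ (fun x => c x P) hne
          exact ⟨b, Finset.mem_filter.mpr ⟨hb, hmax⟩⟩)
  else PMF.pure (defaultBS n)

/-- Exponential ranking scheme: probability of selecting the `i`-th ranked individual
(1-indexed) in a population of size `μ`. -/
def rExp (i μ : ℕ) : ℝ≥0∞ :=
  (2 : ℝ≥0∞)⁻¹ ^ i / ∑ j ∈ Finset.Icc 1 μ, (2 : ℝ≥0∞)⁻¹ ^ j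

/-- Power-law ranking scheme. -/
def rPow (i μ : ℕ) : ℝ≥0∞ :=
  ((i : ℝ≥0∞) ^ 2)⁻¹ / ∑ j ∈ Finset.Icc 1 μ, ((j : ℝ≥0∞) ^ 2)⁻¹

/-- Harmonic ranking scheme. -/
def rHarm (i μ : ℕ) : ℝ≥0∞ :=
  (i : ℝ≥0∞)⁻¹ / ∑ j ∈ Finset.Icc 1 μ, (j : ℝ≥0∞)⁻¹


/-- `select` implements a rank-based parent-selection scheme with rank probabilities
`r i μ` (1-indexed rank `i`, population size `μ`) with respect to the diversity
contribution `c`, for some non-increasing ordering of the population by `c`. -/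
def implementsRankScheme {n : ℕ} {α : Type*} [Preorder α]
    (c : BitString n → Finset (BitString n) → α) (r : ℕ → ℕ → ℝ≥0∞)
    (select : Finset (BitString n) → PMF (BitString n)) : Prop :=
  ∀ P : Finset (BitString n), P.Nonempty →
    ∃ l : List (BitString n), l.Nodup ∧ l.toFinset = P ∧
      l.Chain' (fun a b => c b P ≤ c a P) ∧
      (∀ i : Fin l.length, select P (l.get i) = r (i.val + 1) P.card) ∧
      (∀ x : BitString n, x ∉ P → select P x = 0)

/-- The Pareto-optimal point `1^i 0^(n-i)` of LOTZ. -/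
def opt (n i : ℕ) : BitString n := fun t => decide ((t : ℕ) < i)

/-- The whole Pareto set of LOTZ as a population. -/
def frontSet (n : ℕ) : Finset (BitString n) := (Finset.range (n + 1)).image (opt n)

/-- `P` has a gap at position `i`. -/
def hasGapAt {n : ℕ} (P : Finset (BitString n)) (i : ℕ) : Prop :=
  opt n i ∉ P ∧ (∃ j, j < i ∧ opt n j ∈ P) ∧ (∃ k, i < k ∧ k ≤ n ∧ opt n k ∈ P)

/-- `P` has a gap at some position `i` with `n/4 ≤ i ≤ 3n/4`. -/
def gapInRange (n : ℕ) (P : Finset (BitString n)) : Prop :=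
  ∃ i : ℕ, n ≤ 4 * i ∧ 4 * i ≤ 3 * n ∧ hasGapAt P i

/-- `P` contains both `0^n` and `1^n`. -/
def bothExtremes (n : ℕ) (P : Finset (BitString n)) : Prop :=
  allZeros n ∈ P ∧ allOnes n ∈ P

/-- The chain stopped (frozen) as soon as `cond` holds. -/
def stopWhen {S : Type*} (cond : S → Prop) (st : S → PMF S) (s : S) : PMF S :=
  if cond s then PMF.pure s else st s


/-!
The potential is `(n - max L) · e n / 2`, where `max L` is the largest value of `L = LO + TZ` in
the population. A point weakly dominating another has at least its `L`-value, so `max L` never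
decreases. A selected parent `s` has `L(s) = max L`; if it is not Pareto-optimal then
`L(s) ≤ n - 2`, and flipping either its first zero or its last one yields a point dominating `s`.
That point has a larger `L`-value than every member, so it is accepted and `max L` grows. Each
of the two flips has probability `(1/n)(1 - 1/n)^(n-1) ≥ 1/(e n)`, so the potential drops by at
least one in expectation per iteration, and it starts at most at `e n² / 2`.
-/

end EMO

namespace PMF

variable {α β : Type*}

def expect (p : PMF α) (f : α → ℝ≥0∞) : ℝ≥0∞ := ∑' a, p a * f a

theorem expect_bind (q : PMF α) (k : α → PMF β) (f : β → ℝ≥0∞) :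
    (q.bind k).expect f = q.expect fun a => (k a).expect f := by
  simp only [expect, bind_apply, ← ENNReal.tsum_mul_right]
  rw [ENNReal.tsum_comm]
  simp only [mul_assoc, ENNReal.tsum_mul_left]

theorem expect_map (p : PMF α) (k : α → β) (f : β → ℝ≥0∞) :
    (p.map k).expect f = p.expect (f ∘ k) := by
  rw [map, expect_bind]
  simp [expect, pure_apply]

theorem expect_add_const (p : PMF α) (f : α → ℝ≥0∞) (c : ℝ≥0∞) :
    p.expect (fun a => f a + c) = p.expect f + c := by
  simp only [expect, mul_add, ENNReal.tsum_add, ENNReal.tsum_mul_right, tsum_coe, one_mul]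

theorem expect_le_of_forall_mem_support {p : PMF α} {f : α → ℝ≥0∞} {b : ℝ≥0∞}
    (h : ∀ a ∈ p.support, f a ≤ b) : p.expect f ≤ b :=
  calc p.expect f ≤ ∑' a, p a * b := ENNReal.tsum_le_tsum fun a => by
        by_cases ha : p a = 0
        · simp [ha]
        · gcongr; exact h a ha
    _ = b := by rw [ENNReal.tsum_mul_right, tsum_coe, one_mul]

theorem expect_add_one_le_of_hit (p : PMF α) {f : α → ℝ≥0∞} {s : Set α} {a c : ℝ≥0∞}
    (hs : ∀ x ∈ s, f x ≤ a) (hsc : ∀ x ∉ s, f x ≤ a + c)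
    (hhit : 1 ≤ p.toOuterMeasure s * c) : p.expect f + 1 ≤ a + c :=
  calc p.expect f + 1 ≤ p.expect f + p.toOuterMeasure s * c := by gcongr
    _ = p.expect fun x => f x + s.indicator (fun _ => c) x := by
      rw [toOuterMeasure_apply, expect, expect, ← ENNReal.tsum_mul_right, ← ENNReal.tsum_add]
      congr 1; ext x
      by_cases hx : x ∈ s <;> simp [hx, mul_add]
    _ ≤ a + c := expect_le_of_forall_mem_support fun x _ => by
      by_cases hx : x ∈ s
      · simpa [hx] using add_le_add_left (hs x hx) c
      · simpa [hx] using hsc x hx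

end PMF

namespace EMO

section Drift

variable {S : Type*} {init : PMF S} {st : S → PMF S}

theorem invariant_of_mem_support_stateDist {I : S → Prop} (hinit : ∀ s ∈ init.support, I s)
    (hI : ∀ s, I s → ∀ s' ∈ (st s).support, I s') :
    ∀ t, ∀ s ∈ (stateDist init st t).support, I s
  | 0 => hinit
  | t + 1 => fun s hs => by
    obtain ⟨a, ha, hs⟩ := (PMF.mem_support_bind_iff _ _ _).1 hs
    exact hI a (invariant_of_mem_support_stateDist hinit hI t a ha) s hs

theorem expectedRuntime_le_of_drift {goal I : S → Prop} (h : S → ℝ≥0∞)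
    (hinit : ∀ s ∈ init.support, I s) (hI : ∀ s, I s → ∀ s' ∈ (st s).support, I s')
    (hmono : ∀ s, I s → (st s).expect h ≤ h s)
    (hdrift : ∀ s, I s → ¬ goal s → (st s).expect h + 1 ≤ h s) :
    expectedRuntime init st goal ≤ init.expect h := by
  set μ := stateDist init st
  have hstep (t : ℕ) :
      (μ (t + 1)).expect h + (μ t).toOuterMeasure {s | ¬ goal s} ≤ (μ t).expect h := by
    rw [show μ (t + 1) = (μ t).bind st from rfl, PMF.expect_bind, PMF.toOuterMeasure_apply,
      PMF.expect, PMF.expect, ← ENNReal.tsum_add]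
    refine ENNReal.tsum_le_tsum fun s => ?_
    by_cases hs : μ t s = 0
    · simp [hs]
    have hIs := invariant_of_mem_support_stateDist hinit hI t s hs
    by_cases hg : goal s
    · simpa [hg] using mul_le_mul_right (hmono s hIs) (μ t s)
    · simpa [hg, mul_add] using mul_le_mul_right (hdrift s hIs hg) (μ t s)
  have htele (T : ℕ) :
      ∑ t ∈ Finset.range T, (μ t).toOuterMeasure {s | ¬ goal s} + (μ T).expect h ≤
        init.expect h := by
    induction T with
    | zero => simp [μ, stateDist]
    | succ T ih =>
      rw [Finset.sum_range_succ, add_assoc, add_comm _ ((μ (T + 1)).expect h)]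
      exact (add_le_add_right (hstep T) _).trans ih
  exact ENNReal.tsum_le_of_sum_range_le fun T => le_self_add.trans (htele T)

end Drift

variable {n : ℕ}

section LeadingOnesTrailingZeros

variable (x : BitString n)

theorem lt_leadingOnes_iff {j : Fin n} : (j : ℕ) < leadingOnes x ↔ ∀ k ≤ j, x k = true :=
  Fin.lt_card_filter_univ_iff_apply_of_imp _ fun _ _ hji hi k hkj => hi k (hkj.trans hji)

theorem trailingZeros_eq_card_rev :
    trailingZeros x = (Finset.univ.filter fun j : Fin n => ∀ k ≤ j, x k.rev = false).card :=
  Finset.card_nbij' Fin.rev Fin.rev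
    (fun i hi => by
      simp only [Finset.coe_filter, Finset.mem_univ, true_and, Set.mem_ofPred_eq] at hi ⊢
      exact fun k hk => hi _ (Fin.le_rev_iff.1 hk))
    (fun i hi => by
      simp only [Finset.coe_filter, Finset.mem_univ, true_and, Set.mem_ofPred_eq] at hi ⊢
      exact fun k hk => by simpa using hi k.rev (Fin.rev_le_iff.2 hk))
    (fun i _ => Fin.rev_rev i) (fun i _ => Fin.rev_rev i)

theorem lt_trailingZeros_iff {j : Fin n} :
    (j : ℕ) < trailingZeros x ↔ ∀ k ≤ j, x k.rev = false := by
  rw [trailingZeros_eq_card_rev]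
  exact Fin.lt_card_filter_univ_iff_apply_of_imp _ fun _ _ hji hi k hkj => hi k (hkj.trans hji)

theorem leadingOnes_le : leadingOnes x ≤ n :=
  (Finset.card_le_univ _).trans_eq (Fintype.card_fin n)

theorem trailingZeros_le : trailingZeros x ≤ n :=
  (Finset.card_le_univ _).trans_eq (Fintype.card_fin n)

theorem apply_of_lt_leadingOnes {k : Fin n} (hk : (k : ℕ) < leadingOnes x) : x k = true :=
  (lt_leadingOnes_iff x).1 hk k le_rfl

theorem apply_rev_of_lt_trailingZeros {k : Fin n} (hk : (k : ℕ) < trailingZeros x) :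
    x k.rev = false :=
  (lt_trailingZeros_iff x).1 hk k le_rfl

theorem apply_eq_false_of_eq_leadingOnes {i : Fin n} (hi : (i : ℕ) = leadingOnes x) :
    x i = false := by
  by_contra hx
  refine absurd ((lt_leadingOnes_iff x (j := i)).2 fun k hk => ?_) (by omega)
  rcases hk.lt_or_eq with hk | rfl
  · exact apply_of_lt_leadingOnes x (hi ▸ hk)
  · simpa using hx

theorem apply_rev_eq_true_of_eq_trailingZeros {i : Fin n} (hi : (i : ℕ) = trailingZeros x) :
    x i.rev = true := by
  by_contra hx
  refine absurd ((lt_trailingZeros_iff x (j := i)).2 fun k hk => ?_) (by omega)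
  rcases hk.lt_or_eq with hk | rfl
  · exact apply_rev_of_lt_trailingZeros x (hi ▸ hk)
  · simpa using hx

theorem le_leadingOnes {m : ℕ} (hm : m ≤ n) (h : ∀ k : Fin n, (k : ℕ) < m → x k = true) :
    m ≤ leadingOnes x := by
  rcases m with _ | m
  · exact Nat.zero_le _
  · exact (lt_leadingOnes_iff x (j := ⟨m, hm⟩)).2 fun k hk => h k (Nat.lt_succ_of_le hk)

theorem le_trailingZeros {m : ℕ} (hm : m ≤ n) (h : ∀ k : Fin n, (k : ℕ) < m → x k.rev = false) :
    m ≤ trailingZeros x := by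
  rcases m with _ | m
  · exact Nat.zero_le _
  · exact (lt_trailingZeros_iff x (j := ⟨m, hm⟩)).2 fun k hk => h k (Nat.lt_succ_of_le hk)

theorem Ldom_le : Ldom x ≤ n := by
  by_contra! h
  have := leadingOnes_le x
  have := trailingZeros_le x
  have hk : trailingZeros x - 1 < n := by unfold Ldom at h; omega
  have h₁ := apply_rev_of_lt_trailingZeros x (k := ⟨_, hk⟩) (by unfold Ldom at h; simp; omega)
  have h₂ := apply_of_lt_leadingOnes x (k := Fin.rev ⟨_, hk⟩) (by unfold Ldom at h; simp; omega)
  simp [h₁] at h₂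

/-- `L(x) = n - 1` is impossible: the bit right after the leading ones would be both the first
zero and the last one. -/
theorem Ldom_add_two_le_of_lt (h : Ldom x < n) : Ldom x + 2 ≤ n := by
  by_contra hne
  unfold Ldom at h hne
  have h₁ := apply_rev_eq_true_of_eq_trailingZeros x (i := ⟨trailingZeros x, by omega⟩) rfl
  rw [apply_eq_false_of_eq_leadingOnes x (by simp; omega)] at h₁
  exact Bool.false_ne_true h₁

end LeadingOnesTrailingZeros

theorem flipBit_apply_self (x : BitString n) (i : Fin n) : flipBit x i i = !x i :=
  Function.update_self _ _ _

theorem flipBit_apply_of_ne (x : BitString n) {i j : Fin n} (h : j ≠ i) :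
    flipBit x i j = x j :=
  Function.update_of_ne h _ _

theorem flipBit_injective (x : BitString n) : Function.Injective (flipBit x) := by
  intro i j hij
  by_contra hne
  have := congrFun hij i
  rw [flipBit_apply_self, flipBit_apply_of_ne x hne] at this
  exact Bool.not_ne_self _ this

section Dominance

variable {x y : BitString n}

theorem dominates_LOTZ_iff :
    dominates LOTZ y x ↔
      leadingOnes x ≤ leadingOnes y ∧ trailingZeros x ≤ trailingZeros y ∧ Ldom x < Ldom y := by
  simp only [dominates, LOTZ, Ldom, Nat.cast_le, ne_eq, Prod.mk.injEq, Nat.cast_inj]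
  omega

theorem Ldom_le_of_weaklyDominates (h : weaklyDominates LOTZ y x) : Ldom x ≤ Ldom y := by
  simp only [weaklyDominates, LOTZ, Nat.cast_le] at h
  exact Nat.add_le_add h.1 h.2

theorem dominates_flipBit_leadingOnes (h : Ldom x + 2 ≤ n) {i : Fin n}
    (hi : (i : ℕ) = leadingOnes x) : dominates LOTZ (flipBit x i) x := by
  unfold Ldom at h
  have hLO : leadingOnes x + 1 ≤ leadingOnes (flipBit x i) := by
    refine le_leadingOnes _ (by omega) fun k hk => ?_
    by_cases hki : k = i
    · rw [hki, flipBit_apply_self, apply_eq_false_of_eq_leadingOnes x hi, Bool.not_false]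
    · rw [flipBit_apply_of_ne x hki]
      exact apply_of_lt_leadingOnes x (by have := Fin.val_ne_of_ne hki; omega)
  have hTZ : trailingZeros x ≤ trailingZeros (flipBit x i) :=
    le_trailingZeros _ (trailingZeros_le x) fun k hk => by
      rw [flipBit_apply_of_ne x (by rw [ne_eq, Fin.ext_iff, Fin.val_rev]; omega)]
      exact apply_rev_of_lt_trailingZeros x hk
  exact dominates_LOTZ_iff.2 ⟨by omega, hTZ, by unfold Ldom; omega⟩

theorem dominates_flipBit_rev_trailingZeros (h : Ldom x + 2 ≤ n) {i : Fin n}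
    (hi : (i : ℕ) = trailingZeros x) : dominates LOTZ (flipBit x i.rev) x := by
  unfold Ldom at h
  have hLO : leadingOnes x ≤ leadingOnes (flipBit x i.rev) :=
    le_leadingOnes _ (leadingOnes_le x) fun k hk => by
      rw [flipBit_apply_of_ne x (by rw [ne_eq, Fin.ext_iff, Fin.val_rev]; omega)]
      exact apply_of_lt_leadingOnes x hk
  have hTZ : trailingZeros x + 1 ≤ trailingZeros (flipBit x i.rev) := by
    refine le_trailingZeros _ (by omega) fun k hk => ?_
    by_cases hki : k = i
    · rw [hki, flipBit_apply_self, apply_rev_eq_true_of_eq_trailingZeros x hi, Bool.not_true]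
    · rw [flipBit_apply_of_ne x (Fin.rev_injective.ne hki)]
      exact apply_rev_of_lt_trailingZeros x (by have := Fin.val_ne_of_ne hki; omega)
  exact dominates_LOTZ_iff.2 ⟨hLO, by omega, by unfold Ldom; omega⟩

theorem paretoOptimal_LOTZ_iff : paretoOptimal LOTZ x ↔ Ldom x = n := by
  refine ⟨fun hx => ?_, fun hx ⟨y, hy⟩ => ?_⟩
  · by_contra hne
    have h := Ldom_add_two_le_of_lt x ((Ldom_le x).lt_of_ne hne)
    unfold Ldom at h
    exact hx ⟨_, dominates_flipBit_leadingOnes (i := ⟨leadingOnes x, by omega⟩) h rfl⟩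
  · have := (dominates_LOTZ_iff.1 hy).2.2
    have := Ldom_le y
    omega

theorem exists_dominating_flipBits (hx : ¬ paretoOptimal LOTZ x) :
    ∃ i j : Fin n, i ≠ j ∧ dominates LOTZ (flipBit x i) x ∧ dominates LOTZ (flipBit x j) x := by
  have h := Ldom_add_two_le_of_lt x ((Ldom_le x).lt_of_ne (mt paretoOptimal_LOTZ_iff.2 hx))
  unfold Ldom at h
  refine ⟨⟨leadingOnes x, by omega⟩, Fin.rev ⟨trailingZeros x, by omega⟩, ?_,
    dominates_flipBit_leadingOnes h rfl, dominates_flipBit_rev_trailingZeros h rfl⟩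
  simp only [ne_eq, Fin.ext_iff, Fin.val_rev]
  omega

end Dominance

section Population

variable {f : BitString n → ℤ × ℤ} {P : Finset (BitString n)} {s' : BitString n}

theorem updatePop_nonempty (hP : P.Nonempty) : (updatePop f P s').Nonempty := by
  unfold updatePop
  split
  · exact hP
  · exact Finset.insert_nonempty _ _

theorem mem_updatePop (h : ∀ z ∈ P, ¬ dominates f z s') : s' ∈ updatePop f P s' := by
  rw [updatePop, if_neg (by simpa using h)]
  exact Finset.mem_insert_self _ _

theorem sup_Ldom_le_sup_updatePop : P.sup Ldom ≤ (updatePop LOTZ P s').sup Ldom := by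
  unfold updatePop
  split
  · exact le_rfl
  · refine Finset.sup_le fun z hz => ?_
    by_cases hw : weaklyDominates LOTZ s' z
    · exact (Ldom_le_of_weaklyDominates hw).trans (Finset.le_sup (Finset.mem_insert_self _ _))
    · exact Finset.le_sup (Finset.mem_insert_of_mem (Finset.mem_filter.2 ⟨hz, hw⟩))

/-- Such a point is dominated by no member, so it is accepted. -/
theorem Ldom_le_sup_updatePop (h : P.sup Ldom < Ldom s') :
    Ldom s' ≤ (updatePop LOTZ P s').sup Ldom :=
  Finset.le_sup <| mem_updatePop fun _ hz hdom =>
    absurd ((dominates_LOTZ_iff.1 hdom).2.2.trans_le (Finset.le_sup hz)) h.not_gt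

theorem maxLSub_nonempty (hP : P.Nonempty) : (maxLSub P).Nonempty := by
  obtain ⟨x, hx, hmax⟩ := P.exists_max_image Ldom hP
  exact ⟨x, Finset.mem_filter.2 ⟨hx, hmax⟩⟩

theorem Ldom_eq_sup_of_mem_maxLSub {x : BitString n} (hx : x ∈ maxLSub P) :
    x ∈ P ∧ Ldom x = P.sup Ldom := by
  rw [maxLSub, Finset.mem_filter] at hx
  exact ⟨hx.1, le_antisymm (Finset.le_sup hx.1) (Finset.sup_le hx.2)⟩

theorem exists_eq_updatePop_of_mem_support_stepMod
    {select : Finset (BitString n) → PMF (BitString n)} {mutate : BitString n → PMF (BitString n)}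
    {Q : Finset (BitString n)} (hQ : Q ∈ (stepMod f select mutate P).support) :
    ∃ s', Q = updatePop f P s' := by
  obtain ⟨s, -, hQ⟩ := (PMF.mem_support_bind_iff _ _ _).1 hQ
  obtain ⟨s', -, rfl⟩ := (PMF.mem_support_map_iff _ _ _).1 hQ
  exact ⟨s', rfl⟩

end Population

theorem globalMutationAux_cons_apply (i : Fin n) (l : List (Fin n)) (x y : BitString n) :
    globalMutationAux (i :: l) x y =
      min (n : ℝ≥0∞)⁻¹ 1 * globalMutationAux l (flipBit x i) y +
        (1 - min (n : ℝ≥0∞)⁻¹ 1) * globalMutationAux l x y := by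
  simp [globalMutationAux, PMF.bind_apply, bitFlipCoin]

theorem pow_le_globalMutationAux_self (l : List (Fin n)) (x : BitString n) :
    (1 - min (n : ℝ≥0∞)⁻¹ 1) ^ l.length ≤ globalMutationAux l x x := by
  induction l with
  | nil => simp [globalMutationAux]
  | cons i l ih =>
    rw [globalMutationAux_cons_apply, List.length_cons, pow_succ']
    exact le_add_left (by gcongr)

theorem le_globalMutationAux_flipBit (l : List (Fin n)) (x : BitString n) {i : Fin n}
    (hi : i ∈ l) :
    min (n : ℝ≥0∞)⁻¹ 1 * (1 - min (n : ℝ≥0∞)⁻¹ 1) ^ (l.length - 1) ≤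
      globalMutationAux l x (flipBit x i) := by
  induction l with
  | nil => simp at hi
  | cons j l ih =>
    rw [globalMutationAux_cons_apply, List.length_cons, Nat.add_sub_cancel]
    rcases List.mem_cons.1 hi with rfl | hi
    · exact le_add_right (by gcongr; exact pow_le_globalMutationAux_self l _)
    · refine le_add_left ?_
      obtain ⟨m, hm⟩ := Nat.exists_eq_succ_of_ne_zero (List.length_pos_of_mem hi).ne'
      calc _ = (1 - min (n : ℝ≥0∞)⁻¹ 1) *
              (min (n : ℝ≥0∞)⁻¹ 1 * (1 - min (n : ℝ≥0∞)⁻¹ 1) ^ (l.length - 1)) := by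
            rw [hm, Nat.succ_sub_one, pow_succ]; ring
        _ ≤ _ := by gcongr; exact ih hi

def oneBitFlipProb (n : ℕ) : ℝ≥0∞ := (n : ℝ≥0∞)⁻¹ * (1 - (n : ℝ≥0∞)⁻¹) ^ (n - 1)

theorem oneBitFlipProb_le_globalMutation_flipBit (x : BitString n) (i : Fin n) :
    oneBitFlipProb n ≤ globalMutation x (flipBit x i) := by
  have hmin : min (n : ℝ≥0∞)⁻¹ 1 = (n : ℝ≥0∞)⁻¹ :=
    min_eq_left (ENNReal.inv_le_one.2 (Nat.one_le_cast.2 (Nat.one_le_of_lt i.isLt)))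
  simpa [oneBitFlipProb, hmin, globalMutation] using
    le_globalMutationAux_flipBit (List.finRange n) x (List.mem_finRange i)

theorem one_le_exp_one_mul_one_sub_inv_pow (hn : 0 < n) :
    1 ≤ Real.exp 1 * (1 - (n : ℝ)⁻¹) ^ (n - 1) := by
  obtain ⟨m, rfl⟩ := Nat.exists_eq_add_one_of_ne_zero hn.ne'
  rw [Nat.add_sub_cancel]
  rcases Nat.eq_zero_or_pos m with rfl | hm
  · simp [Real.one_le_exp zero_le_one]
  have hm' : (0 : ℝ) < m := Nat.cast_pos.2 hm
  have hbase : 0 ≤ 1 - ((m + 1 : ℕ) : ℝ)⁻¹ := by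
    rw [sub_nonneg]; exact inv_le_one_of_one_le₀ (by simp)
  have hinv : (1 - ((m + 1 : ℕ) : ℝ)⁻¹) * (1 + (m : ℝ)⁻¹) = 1 := by
    push_cast; field_simp; ring
  calc (1 : ℝ) = (1 - ((m + 1 : ℕ) : ℝ)⁻¹) ^ m * (1 + (m : ℝ)⁻¹) ^ m := by
        rw [← mul_pow, hinv, one_pow]
    _ ≤ (1 - ((m + 1 : ℕ) : ℝ)⁻¹) ^ m * Real.exp 1 := by
        gcongr; exact Real.one_add_inv_pow_le_exp
    _ = _ := mul_comm _ _

theorem one_le_two_mul_oneBitFlipProb_mul (hn : 0 < n) :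
    1 ≤ 2 * oneBitFlipProb n * ENNReal.ofReal (Real.exp 1 * n / 2) := by
  have hn' : (0 : ℝ) < n := Nat.cast_pos.2 hn
  have hinv : (n : ℝ≥0∞)⁻¹ = ENNReal.ofReal (n : ℝ)⁻¹ := by
    rw [ENNReal.ofReal_inv_of_pos hn', ENNReal.ofReal_natCast]
  have hbase : 0 ≤ 1 - (n : ℝ)⁻¹ := by
    rw [sub_nonneg]; exact inv_le_one_of_one_le₀ (Nat.one_le_cast.2 hn)
  rw [oneBitFlipProb, hinv, ← ENNReal.ofReal_one, ← ENNReal.ofReal_sub _ (by positivity),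
    ← ENNReal.ofReal_pow hbase, ← ENNReal.ofReal_mul (by positivity), ← ENNReal.ofReal_ofNat 2,
    ← ENNReal.ofReal_mul (by positivity), ← ENNReal.ofReal_mul (by positivity)]
  refine ENNReal.ofReal_le_ofReal ?_
  calc (1 : ℝ) ≤ Real.exp 1 * (1 - (n : ℝ)⁻¹) ^ (n - 1) := one_le_exp_one_mul_one_sub_inv_pow hn
    _ = _ := by field_simp

def lotzPotential (n : ℕ) (P : Finset (BitString n)) : ℝ≥0∞ :=
  ((n - P.sup Ldom : ℕ) : ℝ≥0∞) * ENNReal.ofReal (Real.exp 1 * n / 2)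

theorem lotzPotential_le {P : Finset (BitString n)} {m : ℕ} (h : m ≤ P.sup Ldom) :
    lotzPotential n P ≤ ((n - m : ℕ) : ℝ≥0∞) * ENNReal.ofReal (Real.exp 1 * n / 2) := by
  unfold lotzPotential
  gcongr

theorem expect_globalMutation_lotzPotential_add_one_le {P : Finset (BitString n)}
    {s : BitString n} (hsL : Ldom s = P.sup Ldom) (hs : ¬ paretoOptimal LOTZ s) :
    (globalMutation s).expect (fun s' => lotzPotential n (updatePop LOTZ P s')) + 1 ≤
      lotzPotential n P := by
  obtain ⟨i, j, hij, hi, hj⟩ := exists_dominating_flipBits hs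
  have hL : P.sup Ldom + 1 ≤ n := hsL ▸ (dominates_LOTZ_iff.1 hi).2.2.trans_le (Ldom_le _)
  set c := ENNReal.ofReal (Real.exp 1 * n / 2)
  have hsplit : lotzPotential n P = ((n - (P.sup Ldom + 1) : ℕ) : ℝ≥0∞) * c + c := by
    rw [lotzPotential, show n - P.sup Ldom = n - (P.sup Ldom + 1) + 1 by omega, Nat.cast_succ,
      add_mul, one_mul]
  rw [hsplit]
  refine PMF.expect_add_one_le_of_hit _ (s := ↑({flipBit s i, flipBit s j} : Finset _))
    (fun y hy => lotzPotential_le ?_)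
    (fun y _ => (lotzPotential_le sup_Ldom_le_sup_updatePop).trans_eq hsplit) ?_
  · have hdom : dominates LOTZ y s := by
      simp only [Finset.coe_insert, Finset.coe_singleton, Set.mem_insert_iff,
        Set.mem_singleton_iff] at hy
      rcases hy with rfl | rfl <;> assumption
    have := (dominates_LOTZ_iff.1 hdom).2.2
    exact (by omega : P.sup Ldom + 1 ≤ Ldom y).trans (Ldom_le_sup_updatePop (by omega))
  · rw [PMF.toOuterMeasure_apply_finset, Finset.sum_pair ((flipBit_injective s).ne hij)]
    calc 1 ≤ 2 * oneBitFlipProb n * c := one_le_two_mul_oneBitFlipProb_mul (by omega)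
      _ ≤ _ := by
          rw [two_mul]
          gcongr <;> exact oneBitFlipProb_le_globalMutation_flipBit s _

section Step

variable {select : Finset (BitString n) → PMF (BitString n)} {P : Finset (BitString n)}

theorem expect_stepMod_lotzPotential_le :
    (stepMod LOTZ select globalMutation P).expect (lotzPotential n) ≤ lotzPotential n P :=
  PMF.expect_le_of_forall_mem_support fun Q hQ => by
    obtain ⟨s', rfl⟩ := exists_eq_updatePop_of_mem_support_stepMod hQ
    exact lotzPotential_le sup_Ldom_le_sup_updatePop

theorem expect_stepMod_lotzPotential_add_one_le
    (hsupp : ∀ P : Finset (BitString n), P.Nonempty → ∀ x ∈ (select P).support, x ∈ P)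
    (hP : P.Nonempty) (hgoal : ¬ ∃ x ∈ P, paretoOptimal LOTZ x) :
    (stepMod LOTZ select globalMutation P).expect (lotzPotential n) + 1 ≤ lotzPotential n P := by
  rw [stepMod, PMF.expect_bind, ← PMF.expect_add_const]
  refine PMF.expect_le_of_forall_mem_support fun s hs => ?_
  obtain ⟨hsP, hsL⟩ := Ldom_eq_sup_of_mem_maxLSub (hsupp _ (maxLSub_nonempty hP) s hs)
  rw [PMF.expect_map]
  exact expect_globalMutation_lotzPotential_add_one_le hsL fun h => hgoal ⟨s, hsP, h⟩

end Step

theorem modified_gsemo_lotz_reach_front_general (n : ℕ)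
    (select : Finset (BitString n) → PMF (BitString n))
    (hsupp : ∀ P : Finset (BitString n), P.Nonempty →
      ∀ x ∈ (select P).support, x ∈ P) :
    expectedRuntime (initDist n) (stepMod LOTZ select globalMutation)
        (fun P => ∃ x ∈ P, paretoOptimal LOTZ x) ≤
      ENNReal.ofReal (Real.exp 1 * (n : ℝ) ^ 2 / 2) := by
  have hinit : ∀ P ∈ (initDist n).support, P.Nonempty := fun P hP => by
    obtain ⟨x, -, rfl⟩ := (PMF.mem_support_map_iff _ _ _).1 hP
    exact Finset.singleton_nonempty x
  have hnonempty : ∀ P : Finset (BitString n), P.Nonempty →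
      ∀ Q ∈ (stepMod LOTZ select globalMutation P).support, Q.Nonempty := fun P hP Q hQ => by
    obtain ⟨s', rfl⟩ := exists_eq_updatePop_of_mem_support_stepMod hQ
    exact updatePop_nonempty hP
  calc _ ≤ (initDist n).expect (lotzPotential n) :=
        expectedRuntime_le_of_drift _ hinit hnonempty
          (fun _ _ => expect_stepMod_lotzPotential_le)
          (fun _ hP hgoal => expect_stepMod_lotzPotential_add_one_le hsupp hP hgoal)
    _ ≤ (n : ℝ≥0∞) * ENNReal.ofReal (Real.exp 1 * n / 2) :=
        PMF.expect_le_of_forall_mem_support fun _ _ => lotzPotential_le (Nat.zero_le _)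
    _ = ENNReal.ofReal (Real.exp 1 * (n : ℝ) ^ 2 / 2) := by
        rw [← ENNReal.ofReal_natCast, ← ENNReal.ofReal_mul (Nat.cast_nonneg _)]
        ring_nf

/-- The modified GSEMO (parent selection restricted to the points
maximising `L(x) = LO(x) + TZ(x)`) obtains a first Pareto-optimal point on LOTZ in
expected time at most `∑_{L=0}^{n−2} en/2 ≤ e·n²/2 = O(n²)`, regardless of the
diversity-based parent-selection mechanism used within the restricted subpopulation. -/
theorem modified_gsemo_lotz_reach_front (n : ℕ) (hn : 0 < n)
    (select : Finset (BitString n) → PMF (BitString n))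
    (hsupp : ∀ P : Finset (BitString n), P.Nonempty →
      ∀ x ∈ (select P).support, x ∈ P) :
    expectedRuntime (initDist n) (stepMod LOTZ select globalMutation)
        (fun P => ∃ x ∈ P, paretoOptimal LOTZ x) ≤
      ENNReal.ofReal (Real.exp 1 * (n : ℝ) ^ 2 / 2) :=
  modified_gsemo_lotz_reach_front_general n select hsupp

end EMO
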